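/- Let H_0 be an r_0×n_0 binary matrix such that every vector of F_2^{r_0} is a sum of at most 3 columns of H_0 from pairwise distinct parts of a given (3,0)-partition into p_0 parts, and let H' be a 2m×n' binary matrix such that every vector of F_2^{2m} is a sum of at most 2 columns of H'. If 2^m − 1 ≥ p_0 and m ≥ 2, then Construction QM_5^3 with D = D_4 and indicators in F_{2^m}^* produces an (r_0+3m)-row matrix with 2^m(n_0+1) + n' − 1 columns such that every vector of F_2^{r_0+3m} is a sum of at most 3 of its columns; hence the corresponding binary code has covering radius at most 3, codimension r_0+3m and length 2^m(n_0+1)+n'−1. -/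

import Mathlib

/-!
Write the target as `(s, a, b, c)` and take a covering `s = ∑_{j ∈ T} h j` by at most three
columns of `H₀` from distinct parts, so that the indicators `β j`, `j ∈ T`, are distinct and
nonzero. Choosing the `ξ`-coordinates of the columns `A(h_j, β_j)` is then a Vandermonde
system in the `β j`: with three columns it hits `(a, b, c)` exactly; with two it hits `(b, c)`
(shifted moments, hence `β ≠ 0`) and one column `(w, 0, 0)` of `D₄` fixes `a`; with one it
fixes `a` and two columns of `H'` fix `(b, c)`; with none, `D₄` covers `(a, b, c)` with
`1 + 2` columns.
-/

open Finset

def IsSumOfAtMost {ι M : Type*} [AddCommMonoid M] (f : ι → M) (k : ℕ) (u : M) : Prop :=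
  ∃ T : Finset ι, T.card ≤ k ∧ u = ∑ i ∈ T, f i

namespace IsSumOfAtMost

variable {ι κ M N : Type*} [AddCommMonoid M] [AddCommMonoid N] {f : ι → M} {k l : ℕ}
  {u v : M}

theorem zero (f : ι → M) : IsSumOfAtMost f 0 0 := ⟨∅, by simp, by simp⟩

theorem mono (hu : IsSumOfAtMost f k u) (hkl : k ≤ l) : IsSumOfAtMost f l u :=
  let ⟨T, hT, hu⟩ := hu; ⟨T, hT.trans hkl, hu⟩

theorem map (φ : M →+ N) (hu : IsSumOfAtMost f k u) : IsSumOfAtMost (φ ∘ f) k (φ u) :=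
  let ⟨T, hT, hu⟩ := hu; ⟨T, hT, by simp [hu, map_sum]⟩

theorem sum_comp_injective [Fintype κ] {φ : κ → ι} (hφ : Function.Injective φ) :
    IsSumOfAtMost f (Fintype.card κ) (∑ i, f (φ i)) := by
  classical
  exact ⟨univ.image φ, card_image_le, by rw [sum_image fun _ _ _ _ h => hφ h]⟩

theorem elim {g : κ → M} (hu : IsSumOfAtMost f k u) (hv : IsSumOfAtMost g l v) :
    IsSumOfAtMost (Sum.elim f g) (k + l) (u + v) := by
  obtain ⟨S, hS, rfl⟩ := hu
  obtain ⟨T, hT, rfl⟩ := hv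
  exact ⟨S.disjSum T, by rw [card_disjSum]; omega, by rw [sum_disjSum]; rfl⟩

end IsSumOfAtMost

theorem exists_sum_mul_pow_eq {K : Type*} [Field K] {n : ℕ} {v : Fin n → K}
    (hv : Function.Injective v) (t : Fin n → K) :
    ∃ ξ : Fin n → K, ∀ j : Fin n, ∑ i, ξ i * v i ^ (j : ℕ) = t j := by
  have hunit : IsUnit (Matrix.vandermonde v) :=
    (Matrix.isUnit_iff_isUnit_det _).2
      (isUnit_iff_ne_zero.2 (Matrix.det_vandermonde_ne_zero_iff.2 hv))
  obtain ⟨ξ, hξ⟩ := Matrix.vecMul_surjective_iff_isUnit.2 hunit t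
  exact ⟨ξ, fun j => by rw [← hξ]; rfl⟩

theorem exists_sum_mul_pow_succ_eq {K : Type*} [Field K] {n : ℕ} {v : Fin n → K}
    (hv : Function.Injective v) (hv0 : ∀ i, v i ≠ 0) (t : Fin n → K) :
    ∃ ξ : Fin n → K, ∀ j : Fin n, ∑ i, ξ i * v i ^ ((j : ℕ) + 1) = t j := by
  obtain ⟨η, hη⟩ := exists_sum_mul_pow_eq hv t
  refine ⟨fun i => η i / v i, fun j => ?_⟩
  rw [← hη]
  refine sum_congr rfl fun i _ => ?_
  field_simp [hv0 i]
  ring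

theorem isSumOfAtMost_subtype_val_ne_zero {M : Type*} [AddCommMonoid M] (a : M) :
    IsSumOfAtMost (fun w : {w : M // w ≠ 0} => (w : M)) 1 a := by
  by_cases ha : a = 0
  · subst ha
    exact (IsSumOfAtMost.zero _).mono zero_le_one
  · exact ⟨{⟨a, ha⟩}, by simp, by simp⟩

section D4

variable {K ι : Type*} [Field K] {h' : ι → K × K}

/-- The last `3m` rows of `D₄`, identified with `K × K × K`; its first `r₀` rows vanish. -/
def d4Col (h' : ι → K × K) : {w : K // w ≠ 0} ⊕ ι → K × K × K :=
  Sum.elim (fun w => ((w : K), 0, 0)) (fun j => (0, h' j))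

theorem IsSumOfAtMost.d4Col_mk {k l : ℕ} {a : K} {p : K × K}
    (ha : IsSumOfAtMost (fun w : {w : K // w ≠ 0} => (w : K)) k a) (hp : IsSumOfAtMost h' l p) :
    IsSumOfAtMost (d4Col h') (k + l) (a, p) := by
  have h := (ha.map (AddMonoidHom.inl K (K × K))).elim (hp.map (AddMonoidHom.inr K (K × K)))
  rwa [AddMonoidHom.inl_apply, AddMonoidHom.inr_apply, Prod.mk_add_mk, add_zero, zero_add] at h

theorem exists_isSumOfAtMost_d4Col_sub
    (h'cov : ∀ p : K × K, ∃ T : Finset ι, T.card ≤ 2 ∧ p = ∑ j ∈ T, h' j)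
    {k : ℕ} (hk : k ≤ 3) {v : Fin k → K} (hv : Function.Injective v) (hv0 : ∀ i, v i ≠ 0)
    (t : K × K × K) :
    ∃ ξ : Fin k → K,
      IsSumOfAtMost (d4Col h') (3 - k) (t - ∑ i, (ξ i, v i * ξ i, v i ^ 2 * ξ i)) := by
  obtain ⟨a, b, c⟩ := t
  interval_cases k
  · exact ⟨0, by simpa using (isSumOfAtMost_subtype_val_ne_zero a).d4Col_mk (h'cov (b, c))⟩
  · refine ⟨fun _ => a, ?_⟩
    convert (IsSumOfAtMost.zero _).d4Col_mk (h'cov (b - v 0 * a, c - v 0 ^ 2 * a)) using 1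
    simp
  · obtain ⟨ξ, hξ⟩ := exists_sum_mul_pow_succ_eq hv hv0 ![b, c]
    have hb : ξ 0 * v 0 + ξ 1 * v 1 = b := by simpa [Fin.sum_univ_two] using hξ 0
    have hc : ξ 0 * v 0 ^ 2 + ξ 1 * v 1 ^ 2 = c := by simpa [Fin.sum_univ_two] using hξ 1
    refine ⟨ξ, ?_⟩
    convert (isSumOfAtMost_subtype_val_ne_zero (a - ξ 0 - ξ 1)).d4Col_mk
      (IsSumOfAtMost.zero h') using 1
    simp only [Fin.sum_univ_two, Prod.mk_add_mk, Prod.mk_sub_mk, Prod.mk.injEq, Prod.mk_eq_zero]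
    exact ⟨by ring, by linear_combination -hb, by linear_combination -hc⟩
  · obtain ⟨ξ, hξ⟩ := exists_sum_mul_pow_eq hv ![a, b, c]
    have ha : ξ 0 + ξ 1 + ξ 2 = a := by simpa [Fin.sum_univ_three] using hξ 0
    have hb : ξ 0 * v 0 + ξ 1 * v 1 + ξ 2 * v 2 = b := by simpa [Fin.sum_univ_three] using hξ 1
    have hc : ξ 0 * v 0 ^ 2 + ξ 1 * v 1 ^ 2 + ξ 2 * v 2 ^ 2 = c := by
      simpa [Fin.sum_univ_three] using hξ 2
    refine ⟨ξ, ?_⟩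
    convert IsSumOfAtMost.zero (d4Col h') using 1
    simp only [Fin.sum_univ_three, Prod.mk_add_mk, Prod.mk_sub_mk, Prod.mk_eq_zero]
    exact ⟨by linear_combination -ha, by linear_combination -hb, by linear_combination -hc⟩

end D4

theorem card_prod_sum_nonzero_sum {ι K κ : Type*} [Fintype ι] [Fintype K] [Zero K]
    [DecidableEq K] [Fintype κ] :
    Fintype.card ((ι × K) ⊕ ({w : K // w ≠ 0} ⊕ κ))
      = Fintype.card K * (Fintype.card ι + 1) + Fintype.card κ - 1 := by
  have hK : 1 ≤ Fintype.card K := Fintype.card_pos_iff.2 ⟨0⟩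
  simp only [Fintype.card_sum, Fintype.card_prod, Fintype.card_subtype_compl,
    Fintype.card_unique]
  rw [mul_add_one, mul_comm]
  omega

theorem QM5_3_construction_general
    (r0 n0 n' p0 m : ℕ)
    (K : Type) [Field K] [Fintype K] [DecidableEq K] (hK : Fintype.card K = 2 ^ m)
    (h : Fin n0 → (Fin r0 → ZMod 2)) (col : Fin n0 → Fin p0)
    (hcov : ∀ s : Fin r0 → ZMod 2, ∃ T : Finset (Fin n0),
        T.card ≤ 3 ∧ Set.InjOn col ↑T ∧ s = ∑ j ∈ T, h j)
    (h' : Fin n' → K × K)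
    (h'cov : ∀ u : K × K, ∃ T : Finset (Fin n'), T.card ≤ 2 ∧ u = ∑ j ∈ T, h' j)
    (β : Fin n0 → K) (hβ0 : ∀ j, β j ≠ 0)
    (hβ : ∀ i j, col i ≠ col j → β i ≠ β j) :
    Fintype.card ((Fin n0 × K) ⊕ ({w : K // w ≠ 0} ⊕ Fin n'))
        = 2 ^ m * (n0 + 1) + n' - 1 ∧
    ∀ u : (Fin r0 → ZMod 2) × K × K × K,
      ∃ T : Finset ((Fin n0 × K) ⊕ ({w : K // w ≠ 0} ⊕ Fin n')),
        T.card ≤ 3 ∧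
        u = ∑ i ∈ T, Sum.elim
              (fun jx : Fin n0 × K =>
                (h jx.1, jx.2, β jx.1 * jx.2, β jx.1 ^ 2 * jx.2))
              (Sum.elim
                (fun w : {w : K // w ≠ 0} =>
                  ((0 : Fin r0 → ZMod 2), (w : K), (0 : K), (0 : K)))
                (fun j : Fin n' =>
                  ((0 : Fin r0 → ZMod 2), (0 : K), (h' j).1, (h' j).2))) i := by
  refine ⟨by simpa [hK] using card_prod_sum_nonzero_sum (ι := Fin n0) (K := K) (κ := Fin n'),
    ?_⟩
  rintro ⟨s, t⟩
  obtain ⟨T, hT3, hTcol, rfl⟩ := hcov s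
  set e : Fin T.card → Fin n0 := fun i => T.equivFin.symm i
  have he : Function.Injective e := Subtype.val_injective.comp T.equivFin.symm.injective
  have hβe : Function.Injective (β ∘ e) := fun i j hij =>
    he (hTcol (T.equivFin.symm i).2 (T.equivFin.symm j).2 (not_not.1 fun hne => hβ _ _ hne hij))
  obtain ⟨ξ, hξ⟩ := exists_isSumOfAtMost_d4Col_sub h'cov hT3 hβe (fun i => hβ0 (e i)) t
  have hA := IsSumOfAtMost.sum_comp_injective
    (f := fun jx : Fin n0 × K => (h jx.1, jx.2, β jx.1 * jx.2, β jx.1 ^ 2 * jx.2))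
    (φ := fun i => (e i, ξ i)) fun i j hij => he (Prod.ext_iff.1 hij).1
  have hD := hξ.map (AddMonoidHom.inr (Fin r0 → ZMod 2) (K × K × K))
  change IsSumOfAtMost _ 3 _
  convert (hA.elim hD).mono (by rw [Fintype.card_fin]; omega : _ ≤ 3) using 1
  · funext x
    rcases x with _ | _ | _ <;> rfl
  · refine Prod.ext ?_ ?_
    · simp only [Prod.fst_add, Prod.fst_sum, AddMonoidHom.inr_apply, add_zero]
      exact (T.sum_coe_sort h).symm.trans (T.equivFin.symm.sum_comp _).symm
    · simp only [Prod.snd_add, Prod.snd_sum, AddMonoidHom.inr_apply]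
      exact (add_sub_cancel _ _).symm

/-- Construction QM_5^3. From H₀ (columns h) with a
(3,0)-partition into p₀ parts, an auxiliary matrix H' (columns h' in
F_2^{2m} ≅ K × K) of covering radius 2, with 2^m − 1 ≥ p₀ and m ≥ 2, nonzero
indicators β distinct on distinct parts and D = D₄, one obtains an
(r₀+3m)-row matrix with 2^m(n₀+1) + n' − 1 columns such that every vector of
F_2^{r₀+3m} is a sum of at most 3 of its columns (covering radius ≤ 3). -/
theorem QM5_3_construction
    (r0 n0 n' p0 m : ℕ) (hm : 2 ≤ m)
    (K : Type) [Field K] [Fintype K] [DecidableEq K] (hK : Fintype.card K = 2 ^ m)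
    (h : Fin n0 → (Fin r0 → ZMod 2)) (col : Fin n0 → Fin p0)
    (hcov : ∀ s : Fin r0 → ZMod 2, ∃ T : Finset (Fin n0),
        T.card ≤ 3 ∧ Set.InjOn col ↑T ∧ s = ∑ j ∈ T, h j)
    (h' : Fin n' → K × K)
    (h'cov : ∀ u : K × K, ∃ T : Finset (Fin n'), T.card ≤ 2 ∧ u = ∑ j ∈ T, h' j)
    (hp : p0 ≤ 2 ^ m - 1)
    (β : Fin n0 → K) (hβ0 : ∀ j, β j ≠ 0)
    (hβ : ∀ i j, col i ≠ col j → β i ≠ β j) :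
    Fintype.card ((Fin n0 × K) ⊕ ({w : K // w ≠ 0} ⊕ Fin n'))
        = 2 ^ m * (n0 + 1) + n' - 1 ∧
    ∀ u : (Fin r0 → ZMod 2) × K × K × K,
      ∃ T : Finset ((Fin n0 × K) ⊕ ({w : K // w ≠ 0} ⊕ Fin n')),
        T.card ≤ 3 ∧
        u = ∑ i ∈ T, Sum.elim
              (fun jx : Fin n0 × K =>
                (h jx.1, jx.2, β jx.1 * jx.2, β jx.1 ^ 2 * jx.2))
              (Sum.elim
                (fun w : {w : K // w ≠ 0} =>
                  ((0 : Fin r0 → ZMod 2), (w : K), (0 : K), (0 : K)))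
                (fun j : Fin n' =>
                  ((0 : Fin r0 → ZMod 2), (0 : K), (h' j).1, (h' j).2))) i :=
  QM5_3_construction_general r0 n0 n' p0 m K hK h col hcov h' h'cov β hβ0 hβ
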